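/- arXiv:1302.2678 — 4 statements merged into one kernel-verified Lean document; each statement's English description precedes it below -/
import Mathlib

section
/- With the setup below, assume in addition that Q is invertible and that 2A = QD + DQᵀ. Let μ ∈ ℝ^m, and set μ̄ := G^{−1/2} Uᵀ μ and γ̄ := 2 G^{1/2} Uᵀ D^{−1} Q^{−1} μ. Then N̄ᵀ γ̄ − T̄ᵀ γ̄ = 2 N̄ᵀ μ̄; equivalently, since N̄ is invertible, (I − (N̄ᵀ)^{−1} T̄ᵀ) γ̄ = 2 μ̄. -/
/-!
With `M := G^{1/2} Uᵀ` and `M' := G^{-1/2} Uᵀ` we have `N̄ = M D^{-1/2}`,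
`Mᵀ M = U G Uᵀ = A` and `Mᵀ M' = 1`. Hence `N̄ᵀ γ̄ = 2 D^{-1/2} A D⁻¹ Q⁻¹ μ`,
`(N̄ + T̄)ᵀ γ̄ = 2 D^{-1/2} D Qᵀ D⁻¹ Q⁻¹ μ` and `N̄ᵀ μ̄ = D^{-1/2} μ`, so the claim is `D^{-1/2} (2A - D Qᵀ) D⁻¹ Q⁻¹ μ = D^{-1/2} μ`,
which holds because the skew symmetry condition says exactly `2A - D Qᵀ = Q D`.
-/

open Matrix

section

variable {n R : Type*} [Fintype n] [DecidableEq n] [CommRing R]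

theorem mul_inv_mul_inv_eq_one_of_skew {A Q D : Matrix n n R} (hskew : (2 : R) • A = Q * D + D * Qᵀ)
    (hQ : IsUnit Q.det) (hD : IsUnit D.det) : ((2 : R) • A - D * Qᵀ) * D⁻¹ * Q⁻¹ = 1 := by
  rw [hskew, add_sub_cancel_right, Matrix.mul_assoc Q, mul_nonsing_inv D hD, Matrix.mul_one,
    mul_nonsing_inv Q hQ]

theorem gammabar_formula_of_transpose_mul_self {A Q D M M' Δ Δ' : Matrix n n R} {μ γ : n → R}
    (hM : Mᵀ * M = A) (hM' : Mᵀ * M' = 1) (hΔ : Δᵀ = Δ'ᵀ * D)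
    (hskew : (2 : R) • A = Q * D + D * Qᵀ) (hQ : IsUnit Q.det) (hD : IsUnit D.det)
    (hγ : γ = (2 : R) • ((M * D⁻¹ * Q⁻¹) *ᵥ μ)) :
    (M * Δ')ᵀ *ᵥ γ - (M' * Q * Δ - M * Δ')ᵀ *ᵥ γ = (2 : R) • ((M * Δ')ᵀ *ᵥ (M' *ᵥ μ)) := by
  have hM'M : M'ᵀ * M = 1 := by rw [← transpose_transpose M, ← transpose_mul, hM', transpose_one]
  have hN : (M * Δ')ᵀ * (M * D⁻¹ * Q⁻¹) = Δ'ᵀ * A * D⁻¹ * Q⁻¹ := by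
    simp only [transpose_mul, Matrix.mul_assoc, ← Matrix.mul_assoc Mᵀ M, hM]
  have hS : (M' * Q * Δ)ᵀ * (M * D⁻¹ * Q⁻¹) = Δ'ᵀ * (D * Qᵀ) * D⁻¹ * Q⁻¹ := by
    simp only [transpose_mul, hΔ, Matrix.mul_assoc, ← Matrix.mul_assoc M'ᵀ M, hM'M, Matrix.one_mul]
  have hμ : (M * Δ')ᵀ * M' = Δ'ᵀ := by
    rw [transpose_mul, Matrix.mul_assoc, hM', Matrix.mul_one]
  have hX : (2 : R) • ((M * Δ')ᵀ * (M * D⁻¹ * Q⁻¹)) - (M' * Q * Δ)ᵀ * (M * D⁻¹ * Q⁻¹) = Δ'ᵀ := by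
    calc _ = Δ'ᵀ * (((2 : R) • A - D * Qᵀ) * D⁻¹ * Q⁻¹) := by
          rw [hN, hS]
          simp only [Matrix.mul_sub, Matrix.sub_mul, Matrix.mul_smul, Matrix.smul_mul,
            Matrix.mul_assoc]
      _ = Δ'ᵀ := by rw [mul_inv_mul_inv_eq_one_of_skew hskew hQ hD, Matrix.mul_one]
  calc (M * Δ')ᵀ *ᵥ γ - (M' * Q * Δ - M * Δ')ᵀ *ᵥ γ
      = (2 : R) • (((2 : R) • ((M * Δ')ᵀ * (M * D⁻¹ * Q⁻¹))
          - (M' * Q * Δ)ᵀ * (M * D⁻¹ * Q⁻¹)) *ᵥ μ) := by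
        simp only [hγ, transpose_sub, Matrix.sub_mul, sub_mulVec, smul_mulVec, mulVec_smul,
          mulVec_mulVec]
        module
    _ = (2 : R) • ((M * Δ')ᵀ *ᵥ (M' *ᵥ μ)) := by rw [hX, mulVec_mulVec, hμ]

theorem diagonal_mul_transpose_transpose_mul_diagonal_mul_transpose (U : Matrix n n R)
    (a b : n → R) :
    (diagonal a * Uᵀ)ᵀ * (diagonal b * Uᵀ) = U * diagonal (a * b) * Uᵀ := by
  simp only [transpose_mul, diagonal_transpose, transpose_transpose, Matrix.mul_assoc,
    ← Matrix.mul_assoc (diagonal a), diagonal_mul_diagonal]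
  rfl

end

theorem gammabar_formula_general
    (m : ℕ)
    (A U Q : Matrix (Fin m) (Fin m) ℝ)
    (hA : A.PosDef)
    (hU : U * Uᵀ = 1)
    (hG : ∀ i j : Fin m, i ≠ j → (Uᵀ * A * U) i j = 0)
    (hQ : IsUnit Q.det)
    (hskew : (2 : ℝ) • A = Q * Matrix.diagonal (fun i => A i i)
        + Matrix.diagonal (fun i => A i i) * Qᵀ)
    (μ : Fin m → ℝ) :
    let G := Uᵀ * A * U
    let Gsqrt := Matrix.diagonal fun i => Real.sqrt (G i i)
    let Ginvsqrt := Matrix.diagonal fun i => (Real.sqrt (G i i))⁻¹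
    let D := Matrix.diagonal fun i => A i i
    let Dsqrt := Matrix.diagonal fun i => Real.sqrt (A i i)
    let Dinvsqrt := Matrix.diagonal fun i => (Real.sqrt (A i i))⁻¹
    let Nbar := Gsqrt * Uᵀ * Dinvsqrt
    let Tbar := Ginvsqrt * Uᵀ * Q * Dsqrt - Nbar
    let mubar := (Ginvsqrt * Uᵀ) *ᵥ μ
    let gammabar := (2 : ℝ) • ((Gsqrt * Uᵀ * D⁻¹ * Q⁻¹) *ᵥ μ)
    Nbarᵀ *ᵥ gammabar - Tbarᵀ *ᵥ gammabar = (2 : ℝ) • (Nbarᵀ *ᵥ mubar) := by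
  intro G Gsqrt Ginvsqrt D Dsqrt Dinvsqrt Nbar Tbar mubar gammabar
  have hGpos (i : Fin m) : 0 < G i i :=
    (hA.conjTranspose_mul_mul_same
      (mulVec_injective_of_isUnit ⟨⟨U, Uᵀ, hU, mul_eq_one_comm.mp hU⟩, rfl⟩)).diag_pos
  have hGdiag : diagonal (fun i => G i i) = G := IsDiag.diagonal_diag fun i j => hG i j
  have hUGU : U * G * Uᵀ = A := by
    simp only [G, Matrix.mul_assoc, hU, Matrix.mul_one, ← Matrix.mul_assoc U, Matrix.one_mul]
  have hsqrt : (fun i => √(G i i)) * (fun i => √(G i i)) = fun i => G i i :=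
    funext fun i => Real.mul_self_sqrt (hGpos i).le
  have hsqrt_inv : (fun i => √(G i i)) * (fun i => (√(G i i))⁻¹) = fun _ => 1 :=
    funext fun i => mul_inv_cancel₀ (Real.sqrt_pos.mpr (hGpos i)).ne'
  refine gammabar_formula_of_transpose_mul_self (A := A) ?_ ?_ ?_ hskew hQ ?_ rfl
  · rw [diagonal_mul_transpose_transpose_mul_diagonal_mul_transpose, hsqrt, hGdiag, hUGU]
  · rw [diagonal_mul_transpose_transpose_mul_diagonal_mul_transpose, hsqrt_inv, diagonal_one,
      Matrix.mul_one, hU]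
  · simp only [Dsqrt, Dinvsqrt, diagonal_transpose, diagonal_mul_diagonal, inv_mul_eq_div,
      Real.div_sqrt]
  · rw [← isUnit_iff_isUnit_det, isUnit_diagonal, Pi.isUnit_iff]
    exact fun i => (hA.diag_pos (i := i)).ne'.isUnit

/-- Setup: `A` is an `m × m` real symmetric positive definite matrix, `D = diag(A)`,
`U` is orthogonal with `G := Uᵀ A U` diagonal, `Q` is invertible and satisfies the
skew symmetry condition `2A = QD + DQᵀ`,
`N̄ := G^{1/2} Uᵀ D^{-1/2}` and `T̄ := G^{-1/2} Uᵀ Q D^{1/2} - N̄`.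
For `μ ∈ ℝ^m`, set `μ̄ := G^{-1/2} Uᵀ μ` and `γ̄ := 2 G^{1/2} Uᵀ D^{-1} Q^{-1} μ`.
Claim: `N̄ᵀ γ̄ - T̄ᵀ γ̄ = 2 N̄ᵀ μ̄`. -/
theorem gammabar_formula
    (m : ℕ) (hm : 1 ≤ m)
    (A U Q : Matrix (Fin m) (Fin m) ℝ)
    (hA : A.PosDef)
    (hU : U * Uᵀ = 1)
    (hG : ∀ i j : Fin m, i ≠ j → (Uᵀ * A * U) i j = 0)
    (hQ : IsUnit Q.det)
    (hskew : (2 : ℝ) • A = Q * Matrix.diagonal (fun i => A i i)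
        + Matrix.diagonal (fun i => A i i) * Qᵀ)
    (μ : Fin m → ℝ) :
    let G := Uᵀ * A * U
    let Gsqrt := Matrix.diagonal fun i => Real.sqrt (G i i)
    let Ginvsqrt := Matrix.diagonal fun i => (Real.sqrt (G i i))⁻¹
    let D := Matrix.diagonal fun i => A i i
    let Dsqrt := Matrix.diagonal fun i => Real.sqrt (A i i)
    let Dinvsqrt := Matrix.diagonal fun i => (Real.sqrt (A i i))⁻¹
    let Nbar := Gsqrt * Uᵀ * Dinvsqrt
    let Tbar := Ginvsqrt * Uᵀ * Q * Dsqrt - Nbar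
    let mubar := (Ginvsqrt * Uᵀ) *ᵥ μ
    let gammabar := (2 : ℝ) • ((Gsqrt * Uᵀ * D⁻¹ * Q⁻¹) *ᵥ μ)
    Nbarᵀ *ᵥ gammabar - Tbarᵀ *ᵥ gammabar = (2 : ℝ) • (Nbarᵀ *ᵥ mubar) :=
  gammabar_formula_general m A U Q hA hU hG hQ hskew μ
end

section
/- Let N and T be m×m real matrices whose j-th columns are denoted n_j and t_j respectively. Assume each n_j is a unit vector and that Nᵀ T is skew-symmetric. Fix j ≠ k in [m] with |⟨n_j, n_k⟩| < 1 and define n_{j,k} := (n_k − ⟨n_j, n_k⟩ n_j) / (1 − ⟨n_j, n_k⟩²)^{1/2}, and symmetrically n_{k,j} := (n_j − ⟨n_j, n_k⟩ n_k) / (1 − ⟨n_j, n_k⟩²)^{1/2}. Then ⟨t_j, n_{j,k}⟩ + ⟨t_k, n_{k,j}⟩ = 0. -/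
open Matrix

/-!
Skew-symmetry of `Nᵀ T` says `⟨n_a, t_b⟩ = -⟨n_b, t_a⟩` for all `a, b`; in particular
`⟨n_a, t_a⟩ = 0`. After clearing the common denominator `√(1 - c²)`, the sum is
`⟨n_k, t_j⟩ + ⟨n_j, t_k⟩ - c (⟨n_j, t_j⟩ + ⟨n_k, t_k⟩)`, and each bracket vanishes.
-/

section TransposeMulSkew

variable {ι κ R : Type*} [Fintype ι] [CommRing R] {N T : Matrix ι κ R}

theorem sum_mul_eq_neg_sum_mul_of_transpose_mul_skew (hskew : (Nᵀ * T)ᵀ = -(Nᵀ * T))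
    (a b : κ) : ∑ i, N i a * T i b = -∑ i, N i b * T i a := by
  simpa [mul_apply] using congrFun (congrFun hskew b) a

theorem sum_mul_self_eq_zero_of_transpose_mul_skew [IsAddTorsionFree R]
    (hskew : (Nᵀ * T)ᵀ = -(Nᵀ * T)) (a : κ) : ∑ i, N i a * T i a = 0 :=
  self_eq_neg.mp (sum_mul_eq_neg_sum_mul_of_transpose_mul_skew hskew a a)

end TransposeMulSkew

theorem sum_mul_sub_mul_div {ι K : Type*} [Fintype ι] [Field K] (u v w : ι → K) (c s : K) :
    ∑ i, u i * ((v i - c * w i) / s) = (∑ i, v i * u i - c * ∑ i, w i * u i) / s := by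
  rw [Finset.mul_sum, ← Finset.sum_sub_distrib, Finset.sum_div]
  exact Finset.sum_congr rfl fun i _ => by ring

theorem edge_boundary_terms_cancel_general
    (m : ℕ) (N T : Matrix (Fin m) (Fin m) ℝ)
    (hskew : (Nᵀ * T)ᵀ = -(Nᵀ * T))
    (j k : Fin m) :
    let c : ℝ := ∑ i, N i j * N i k
    let njk : Fin m → ℝ := fun i => (N i k - c * N i j) / Real.sqrt (1 - c ^ 2)
    let nkj : Fin m → ℝ := fun i => (N i j - c * N i k) / Real.sqrt (1 - c ^ 2)
    (∑ i, T i j * njk i) + (∑ i, T i k * nkj i) = 0 := by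
  intro c njk nkj
  simp only [njk, nkj, sum_mul_sub_mul_div]
  rw [sum_mul_eq_neg_sum_mul_of_transpose_mul_skew hskew k j,
    sum_mul_self_eq_zero_of_transpose_mul_skew hskew j,
    sum_mul_self_eq_zero_of_transpose_mul_skew hskew k]
  ring

/-- Let `N` and `T` be `m × m` real matrices with columns `n_j` and `t_j`.
Assume each `n_j` is a unit vector and `Nᵀ T` is skew-symmetric. For `j ≠ k` with
`|⟨n_j, n_k⟩| < 1`, define `n_{j,k} := (n_k - ⟨n_j,n_k⟩ n_j)/√(1 - ⟨n_j,n_k⟩²)` and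
symmetrically `n_{k,j}`. Then `⟨t_j, n_{j,k}⟩ + ⟨t_k, n_{k,j}⟩ = 0`. -/
theorem edge_boundary_terms_cancel
    (m : ℕ) (N T : Matrix (Fin m) (Fin m) ℝ)
    (hunit : ∀ j : Fin m, ∑ i, (N i j) ^ 2 = 1)
    (hskew : (Nᵀ * T)ᵀ = -(Nᵀ * T))
    (j k : Fin m) (hjk : j ≠ k)
    (hc : |∑ i, N i j * N i k| < 1) :
    let c : ℝ := ∑ i, N i j * N i k
    let njk : Fin m → ℝ := fun i => (N i k - c * N i j) / Real.sqrt (1 - c ^ 2)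
    let nkj : Fin m → ℝ := fun i => (N i j - c * N i k) / Real.sqrt (1 - c ^ 2)
    (∑ i, T i j * njk i) + (∑ i, T i k * nkj i) = 0 :=
  edge_boundary_terms_cancel_general m N T hskew j k
end

section
/- Fix n ≥ 2 and θ > 0, and suppose θ^L_{i,j} = θ^R_{i,j} = θ for all i ∈ [n], j ∈ [n−1]. Then the matrices Q and Q^{(2)} defined below are jointly completely-𝒮: for every nonempty subset J ⊆ [n−1] there exists γ ∈ (0,∞)^J such that Σ_{i∈J} γ_i q_{i,j} ≥ 1 for every j ∈ J, and Σ_{i∈J} γ_i q^{(2)}_{i,(k,ℓ)} ≥ 1 for every pair (k,ℓ) ∈ J × J whose column q^{(2)}_{·,(k,ℓ)} is not the zero vector. -/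
/-- The speed change matrix `V = (v_{i,j})` of the paper, for `n = m + 1` particles
(0-based indices: the condition `j = i - 1` reads `(j : ℕ) + 1 = (i : ℕ)`). -/
def speedV (m : ℕ) (θL θR : Fin (m + 1) → Fin m → ℝ) (i : Fin (m + 1)) (j : Fin m) : ℝ :=
  if (j : ℕ) + 1 = (i : ℕ) then θR i j
  else if (j : ℕ) = (i : ℕ) then -(θL i j)
  else θR i j - θL i j

/-- The reflection matrix `Q = (q_{j,j'})` of the paper: `q_{j,j'} = v_{j+1,j'} - v_{j,j'}`. -/
def reflQ (m : ℕ) (θL θR : Fin (m + 1) → Fin m → ℝ) (j j' : Fin m) : ℝ :=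
  speedV m θL θR j.succ j' - speedV m θL θR j.castSucc j'

/-- The `(n-1) × (n-1)²` matrix `Q⁽²⁾` of the paper, rows indexed by `i ∈ Fin m`,
columns by pairs `(k, ℓ)`. -/
def Qtwo (m : ℕ) (θL θR : Fin (m + 1) → Fin m → ℝ) (i k ℓ : Fin m) : ℝ :=
  if (k : ℕ) + 1 = (i : ℕ) ∧ (ℓ : ℕ) + 1 ≠ (i : ℕ) then -(θL i.castSucc ℓ)
  else if k = i ∧ ℓ ≠ i then θL i.succ ℓ + θR i.castSucc ℓ
  else if (k : ℕ) = (i : ℕ) + 1 ∧ (ℓ : ℕ) ≠ (i : ℕ) + 1 then -(θR i.succ ℓ)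
  else 0

/-!
For a constant specification `θ`, `Q` is `θ` times the tridiagonal matrix `tridiag(-1, 2, -1)`,
and every nonzero column `(k, ℓ)` of `Q⁽²⁾` (those with `k ≠ ℓ`) equals the column `k` of `Q`.
Take `γ_i = (i + 1)(m - i) / θ`: this quadratic vanishes at the two virtual neighbours `-1`
and `m` of the index range and has second difference `-2`, so `∑_i γ_i q_{i,j} = 2` over the
full range. Restricting the sum to `J ∋ j` only drops off-diagonal terms, which are `≤ 0`,
so the sum stays `≥ 2`.
-/

open Finset

def secondDiffMatrix (x y : ℤ) : ℝ :=
  (if x = y then 2 else 0) - (if x = y - 1 then 1 else 0) - (if x = y + 1 then 1 else 0)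

theorem sum_mul_secondDiffMatrix (S : Finset ℤ) (f : ℤ → ℝ) (y : ℤ) :
    ∑ x ∈ S, f x * secondDiffMatrix x y =
      (if y ∈ S then 2 * f y else 0) - (if y - 1 ∈ S then f (y - 1) else 0) -
        (if y + 1 ∈ S then f (y + 1) else 0) := by
  simp only [secondDiffMatrix, mul_sub, mul_ite, mul_zero, mul_one, sum_sub_distrib,
    sum_ite_eq', mul_comm]

theorem le_sum_mul_secondDiffMatrix {S : Finset ℤ} {f : ℤ → ℝ} {y : ℤ} (hy : y ∈ S)
    (hf₁ : 0 ≤ f (y - 1)) (hf₂ : 0 ≤ f (y + 1)) :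
    2 * f y - f (y - 1) - f (y + 1) ≤ ∑ x ∈ S, f x * secondDiffMatrix x y := by
  rw [sum_mul_secondDiffMatrix, if_pos hy]
  split_ifs <;> linarith

theorem reflQ_const (m : ℕ) (θ : ℝ) (i j : Fin m) :
    reflQ m (fun _ _ => θ) (fun _ _ => θ) i j = θ * secondDiffMatrix i j := by
  simp only [reflQ, speedV, secondDiffMatrix, Fin.val_succ, Fin.val_castSucc]
  split_ifs <;> first | ring1 | omega

theorem Qtwo_diag (m : ℕ) (θL θR : Fin (m + 1) → Fin m → ℝ) (i k : Fin m) :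
    Qtwo m θL θR i k k = 0 := by
  simp [Qtwo]

theorem Qtwo_const_of_ne (m : ℕ) (θ : ℝ) (i : Fin m) {k ℓ : Fin m} (hkℓ : k ≠ ℓ) :
    Qtwo m (fun _ _ => θ) (fun _ _ => θ) i k ℓ = reflQ m (fun _ _ => θ) (fun _ _ => θ) i k := by
  rw [reflQ_const]
  simp only [Qtwo, secondDiffMatrix, Fin.ext_iff] at hkℓ ⊢
  split_ifs <;> first | ring1 | omega

def tentWeight (m : ℕ) (x : ℤ) : ℝ := (x + 1) * (m - x)

theorem tentWeight_nonneg {m : ℕ} {x : ℤ} (h₁ : -1 ≤ x) (h₂ : x ≤ m) : 0 ≤ tentWeight m x := by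
  have h₁' : (-1 : ℝ) ≤ x := by exact_mod_cast h₁
  have h₂' : (x : ℝ) ≤ m := by exact_mod_cast h₂
  unfold tentWeight
  apply mul_nonneg <;> linarith

theorem tentWeight_pos {m : ℕ} {x : ℤ} (h₁ : 0 ≤ x) (h₂ : x < m) : 0 < tentWeight m x := by
  have h₁' : (0 : ℝ) ≤ x := by exact_mod_cast h₁
  have h₂' : (x : ℝ) < m := by exact_mod_cast h₂
  unfold tentWeight
  apply mul_pos <;> linarith

theorem two_mul_tentWeight_sub (m : ℕ) (y : ℤ) :
    2 * tentWeight m y - tentWeight m (y - 1) - tentWeight m (y + 1) = 2 := by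
  unfold tentWeight
  push_cast
  ring

theorem two_le_sum_tentWeight_mul_secondDiffMatrix {m : ℕ} {J : Finset (Fin m)} {j : Fin m}
    (hj : j ∈ J) : 2 ≤ ∑ i ∈ J, tentWeight m i * secondDiffMatrix i j := by
  let e : Fin m ↪ ℤ := Fin.valEmbedding.trans Nat.castEmbedding
  have hjS : ((j : ℕ) : ℤ) ∈ J.map e := mem_map_of_mem e hj
  have hjm : (j : ℤ) < m := by exact_mod_cast j.isLt
  have := le_sum_mul_secondDiffMatrix (f := tentWeight m) hjS
    (tentWeight_nonneg (by omega) (by omega)) (tentWeight_nonneg (by omega) (by omega))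
  rwa [two_mul_tentWeight_sub, sum_map] at this

theorem jointly_completelyS_constant_spec_general
    (m : ℕ) (θ : ℝ) (hθ : 0 < θ)
    (θL θR : Fin (m + 1) → Fin m → ℝ)
    (hL : ∀ i j, θL i j = θ) (hR : ∀ i j, θR i j = θ) :
    ∀ J : Finset (Fin m), J.Nonempty →
      ∃ γ : Fin m → ℝ, (∀ i ∈ J, 0 < γ i) ∧
        (∀ j ∈ J, 1 ≤ ∑ i ∈ J, γ i * reflQ m θL θR i j) ∧
        (∀ k ∈ J, ∀ ℓ ∈ J, (∃ i : Fin m, Qtwo m θL θR i k ℓ ≠ 0) →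
          1 ≤ ∑ i ∈ J, γ i * Qtwo m θL θR i k ℓ) := by
  obtain rfl : θL = fun _ _ => θ := funext₂ hL
  obtain rfl : θR = fun _ _ => θ := funext₂ hR
  intro J _
  have hQ : ∀ j ∈ J,
      1 ≤ ∑ i ∈ J, tentWeight m i / θ * reflQ m (fun _ _ => θ) (fun _ _ => θ) i j := by
    intro j hj
    have hsum : ∑ i ∈ J, tentWeight m i / θ * reflQ m (fun _ _ => θ) (fun _ _ => θ) i j =
        ∑ i ∈ J, tentWeight m i * secondDiffMatrix i j := by
      refine sum_congr rfl fun i _ => ?_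
      rw [reflQ_const]
      field_simp
    rw [hsum]
    linarith [two_le_sum_tentWeight_mul_secondDiffMatrix hj]
  refine ⟨fun i => tentWeight m i / θ,
    fun i _ => div_pos (tentWeight_pos (by positivity) (by exact_mod_cast i.isLt)) hθ, hQ, ?_⟩
  rintro k hk ℓ - ⟨i, hi⟩
  have hkℓ : k ≠ ℓ := by
    rintro rfl
    exact hi (Qtwo_diag ..)
  simpa only [Qtwo_const_of_ne _ _ _ hkℓ] using hQ k hk

/-- For the constant specification `θ^L_{i,j} = θ^R_{i,j} = θ > 0`, the matrices `Q`
and `Q⁽²⁾` are jointly completely-𝒮: for every nonempty `J ⊆ [n-1]` there exists a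
positive vector `γ` (indexed by `J`) with `∑_{i∈J} γ_i q_{i,j} ≥ 1` for all `j ∈ J`,
and `∑_{i∈J} γ_i q⁽²⁾_{i,(k,ℓ)} ≥ 1` for all `(k,ℓ) ∈ J × J` whose column of `Q⁽²⁾`
is not identically zero. -/
theorem jointly_completelyS_constant_spec
    (m : ℕ) (hm : 1 ≤ m) (θ : ℝ) (hθ : 0 < θ)
    (θL θR : Fin (m + 1) → Fin m → ℝ)
    (hL : ∀ i j, θL i j = θ) (hR : ∀ i j, θR i j = θ) :
    ∀ J : Finset (Fin m), J.Nonempty →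
      ∃ γ : Fin m → ℝ, (∀ i ∈ J, 0 < γ i) ∧
        (∀ j ∈ J, 1 ≤ ∑ i ∈ J, γ i * reflQ m θL θR i j) ∧
        (∀ k ∈ J, ∀ ℓ ∈ J, (∃ i : Fin m, Qtwo m θL θR i k ℓ ≠ 0) →
          1 ≤ ∑ i ∈ J, γ i * Qtwo m θL θR i k ℓ) :=
  jointly_completelyS_constant_spec_general m θ hθ θL θR hL hR
end

section
/- Fix n ≥ 3 and θ > 0, and consider the 'frozen' specification: θ^L_{j,j} = θ^R_{j+1,j} = θ for all j ∈ [n−1], and θ^L_{i,j} = 0, θ^R_{i,j} = 0 for all other index pairs. Then there is no γ ∈ (0,∞)^{n−1} such that Σ_{i=1}^{n−1} γ_i q_{i,j} ≥ 1 for every j ∈ [n−1] and Σ_{i=1}^{n−1} γ_i q^{(2)}_{i,(k,ℓ)} ≥ 1 for every pair (k,ℓ) ∈ [n−1]² whose column q^{(2)}_{·,(k,ℓ)} is not the zero vector. In particular, the jointly completely-𝒮 condition (Assumption 1(b) of the paper) fails for J = [n−1]. -/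
/-!
In the frozen specification `Q⁽²⁾` is antisymmetric in its column index: the column `(ℓ, k)` is
the negative of the column `(k, ℓ)`. The column `(0, 1)` is nonzero (its entry in row `0` is `θ`),
so the weighted column sums for `(0, 1)` and `(1, 0)` are negatives of each other and cannot both
be at least `1`.
-/

theorem not_one_le_weighted_sum_and_neg {ι : Type*} [Fintype ι] (γ a b : ι → ℝ)
    (hba : ∀ i, b i = -a i) : ¬ (1 ≤ ∑ i, γ i * a i ∧ 1 ≤ ∑ i, γ i * b i) := by
  rintro ⟨ha, hb⟩
  have hsum : ∑ i, γ i * b i = -∑ i, γ i * a i := by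
    simp only [hba, mul_neg, Finset.sum_neg_distrib]
  linarith

section Frozen

variable {m : ℕ} {θ : ℝ} {θL θR : Fin (m + 1) → Fin m → ℝ}

theorem Qtwo_frozen_swap (hL : ∀ i j, θL i j = if (i : ℕ) = (j : ℕ) then θ else 0)
    (hR : ∀ i j, θR i j = if (i : ℕ) = (j : ℕ) + 1 then θ else 0) (i k ℓ : Fin m) :
    Qtwo m θL θR i ℓ k = -Qtwo m θL θR i k ℓ := by
  simp only [Qtwo, hL, hR, Fin.val_succ, Fin.val_castSucc, ← Fin.val_inj]
  split_ifs <;> first | omega | ring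

theorem Qtwo_frozen_zero_zero_one (hm : 2 ≤ m)
    (hL : ∀ i j, θL i j = if (i : ℕ) = (j : ℕ) then θ else 0)
    (hR : ∀ i j, θR i j = if (i : ℕ) = (j : ℕ) + 1 then θ else 0) :
    Qtwo m θL θR ⟨0, by omega⟩ ⟨0, by omega⟩ ⟨1, by omega⟩ = θ := by
  simp [Qtwo, hL, hR]

end Frozen

/-- For the 'frozen' specification with `n ≥ 3` particles (`m = n - 1 ≥ 2` gaps),
the jointly completely-𝒮 condition (Assumption 1(b) of the paper) fails for
`J = [n-1]`: there is no positive vector `γ` with `∑_i γ_i q_{i,j} ≥ 1` for all `j`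
and `∑_i γ_i q⁽²⁾_{i,(k,ℓ)} ≥ 1` for all pairs `(k,ℓ)` whose column of `Q⁽²⁾` is
not identically zero. -/
theorem frozen_spec_not_jointly_completelyS
    (m : ℕ) (hm : 2 ≤ m) (θ : ℝ) (hθ : 0 < θ)
    (θL θR : Fin (m + 1) → Fin m → ℝ)
    (hL : ∀ i j, θL i j = if (i : ℕ) = (j : ℕ) then θ else 0)
    (hR : ∀ i j, θR i j = if (i : ℕ) = (j : ℕ) + 1 then θ else 0) :
    ¬ ∃ γ : Fin m → ℝ, (∀ i, 0 < γ i) ∧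
        (∀ j : Fin m, 1 ≤ ∑ i, γ i * reflQ m θL θR i j) ∧
        (∀ k ℓ : Fin m, (∃ i : Fin m, Qtwo m θL θR i k ℓ ≠ 0) →
          1 ≤ ∑ i, γ i * Qtwo m θL θR i k ℓ) := by
  rintro ⟨γ, -, -, hQtwo⟩
  have hentry := Qtwo_frozen_zero_zero_one hm hL hR
  have hswap := Qtwo_frozen_swap hL hR
  have hcol : ∃ i, Qtwo m θL θR i ⟨0, by omega⟩ ⟨1, by omega⟩ ≠ 0 :=
    ⟨_, hentry ▸ hθ.ne'⟩
  have hcol' : ∃ i, Qtwo m θL θR i ⟨1, by omega⟩ ⟨0, by omega⟩ ≠ 0 :=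
    ⟨_, by rw [hswap, hentry, neg_ne_zero]; exact hθ.ne'⟩
  exact not_one_le_weighted_sum_and_neg γ _ _ (fun i => hswap i _ _)
    ⟨hQtwo _ _ hcol, hQtwo _ _ hcol'⟩
end
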